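/- arXiv:1912.09544 — 5 statements merged into one kernel-verified Lean document; each statement's English description precedes it below -/
import Mathlib

section
/- The pressure with κ = 0 satisfies p^(0)(β,α,μ) = sup_{(x,y)∈ℝ₊²}{μ(x+y) - (a/2)(x+y)² + (b/2)y² - f_0(β,x)} = sup_{x≥0}{μx - (a/2)x² + (μ-ax)₊²/(2(a-b)) - f_0(β,x)}. -/
open Real Set

/-- The κ = 0 pressure
`p⁽⁰⁾(β,α,μ) = sup_{(x,y)∈ℝ₊²}{μ(x+y) - (a/2)(x+y)² + (b/2)y² - f₀(β,x)}`
equals `sup_{x≥0}{μx - (a/2)x² + (μ-ax)₊²/(2(a-b)) - f₀(β,x)}`. -/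
theorem stmt_10 (d : ℕ) (hd : 3 ≤ d) (β μ a b : ℝ) (hβ : 0 < β) (hb : 0 < b) (hab : b < a)
    (p₀ f₀ : ℝ → ℝ)
    (hp₀ : ∀ α ≤ (0 : ℝ), p₀ α =
      (1 / β) * (4 * π * β) ^ (-(d : ℝ) / 2) *
        ∑' k : ℕ, Real.exp (β * α * ((k : ℝ) + 1)) / ((k : ℝ) + 1) ^ (1 + (d : ℝ) / 2))
    (hf₀ : f₀ = fun x => sSup {v : ℝ | ∃ α ≤ (0 : ℝ), v = α * x - p₀ α})
    (p : ℝ)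
    (hp : p = sSup {v : ℝ | ∃ x ≥ (0 : ℝ), ∃ y ≥ (0 : ℝ),
      v = μ * (x + y) - a / 2 * (x + y) ^ 2 + b / 2 * y ^ 2 - f₀ x}) :
    p = sSup {v : ℝ | ∃ x ≥ (0 : ℝ),
      v = μ * x - a / 2 * x ^ 2 + (max (μ - a * x) 0) ^ 2 / (2 * (a - b)) - f₀ x} := by
  have hab' : 0 < a - b := sub_pos.2 hab
  subst hp
  apply csSup_eq_csSup_of_forall_exists_le
  · rintro v ⟨x, hx, y, hy, rfl⟩
    refine ⟨μ * x - a / 2 * x ^ 2 + (max (μ - a * x) 0) ^ 2 / (2 * (a - b)) - f₀ x,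
      ⟨x, hx, rfl⟩, ?_⟩
    have h1 : (μ - a * x) * y ≤ max (μ - a * x) 0 * y :=
      mul_le_mul_of_nonneg_right (le_max_left _ _) hy
    have h2 : 0 ≤ max (μ - a * x) 0 := le_max_right _ _
    have h3 : (max (μ - a * x) 0) ^ 2 / (2 * (a - b)) * (2 * (a - b))
        = (max (μ - a * x) 0) ^ 2 := div_mul_cancel₀ _ (by positivity)
    have key : μ * (x + y) - a / 2 * (x + y) ^ 2 + b / 2 * y ^ 2
        ≤ μ * x - a / 2 * x ^ 2 + (max (μ - a * x) 0) ^ 2 / (2 * (a - b)) := by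
      nlinarith [sq_nonneg ((a - b) * y - max (μ - a * x) 0)]
    linarith
  · rintro v ⟨x, hx, rfl⟩
    set m := max (μ - a * x) 0 with hm
    have hm0 : 0 ≤ m := le_max_right _ _
    have hmm : m * (μ - a * x) = m ^ 2 := by
      rcases max_cases (μ - a * x) 0 with ⟨h1, h2⟩ | ⟨h1, h2⟩ <;> rw [← hm] at h1 <;>
        rw [h1] <;> ring
    refine ⟨μ * (x + m / (a - b)) - a / 2 * (x + m / (a - b)) ^ 2
        + b / 2 * (m / (a - b)) ^ 2 - f₀ x,
      ⟨x, hx, m / (a - b), by positivity, rfl⟩, le_of_eq ?_⟩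
    have h := hab'.ne'
    rcases max_cases (μ - a * x) 0 with ⟨h1, h2⟩ | ⟨h1, h2⟩ <;> rw [hm, h1] <;>
      field_simp <;> ring
end

section
/- The function x ↦ F(x) := f_0(β,x) - μx + (a/2)x² has a unique stationary point x̃₁(μ) on (0,∞), which is its unique global minimizer; x̃₁(μ) is characterized by s_β(x̃₁(μ)) = μ - a x̃₁(μ), and μ ↦ x̃₁(μ) is non-decreasing. -/
open Real Set Filter Topology

/-!
Put `g x = s_β x + a x`. Since `s_β` is monotone and `a > 0`, `g` is continuous and strictly
increasing on `(0, ∞)`, tends to `-∞` at `0⁺` (as `s_β` does) and to `+∞` at `∞`, so by the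
intermediate value theorem it takes every value `μ` exactly once; this solves the stationarity
equation `s_β x = μ - a x`. The derivative of `F` is `g - μ`, which is negative to the left and
positive to the right of that solution, making it the strict global minimizer of `F`. Finally
`g (x̃₁ μ) = μ` with `g` strictly increasing forces `μ ↦ x̃₁ μ` to be monotone.
-/

theorem MonotoneOn.strictMonoOn_add_mul {s : ℝ → ℝ} {S : Set ℝ} {a : ℝ} (hs : MonotoneOn s S)
    (ha : 0 < a) : StrictMonoOn (fun x => s x + a * x) S := fun _ hx _ hy hxy =>
  add_lt_add_of_le_of_lt (hs hx hy hxy.le) (mul_lt_mul_of_pos_left hxy ha)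

theorem MonotoneOn.tendsto_add_mul_atTop {s : ℝ → ℝ} {b a : ℝ} (hs : MonotoneOn s (Ioi b))
    (ha : 0 < a) : Tendsto (fun x => s x + a * x) atTop atTop := by
  have hlin : Tendsto (fun x => s (b + 1) + a * x) atTop atTop :=
    tendsto_atTop_add_const_left _ _ (tendsto_id.const_mul_atTop ha)
  refine tendsto_atTop_mono' _ ?_ hlin
  filter_upwards [eventually_ge_atTop (b + 1)] with x hx
  have hb : b + 1 ∈ Ioi b := by simp
  exact add_le_add_left (hs hb (lt_of_lt_of_le hb hx) hx) _

theorem Filter.Tendsto.add_mul_atBot {s : ℝ → ℝ} {l : Filter ℝ} {b a : ℝ} (hl : l ≤ 𝓝 b)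
    (hs : Tendsto s l atBot) : Tendsto (fun x => s x + a * x) l atBot :=
  hs.atBot_add (((continuous_const.mul continuous_id).tendsto b).mono_left hl)

theorem ContinuousOn.surjOn_Ioi_of_tendsto {g : ℝ → ℝ} {b : ℝ} (hg : ContinuousOn g (Ioi b))
    (hbot : Tendsto g (𝓝[>] b) atBot) (htop : Tendsto g atTop atTop) :
    SurjOn g (Ioi b) univ := by
  intro μ _
  obtain ⟨x, hxμ, hx⟩ :=
    ((hbot.eventually (eventually_le_atBot μ)).and self_mem_nhdsWithin).exists
  obtain ⟨y, hyμ, hy⟩ :=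
    ((htop.eventually (eventually_ge_atTop μ)).and (eventually_gt_atTop b)).exists
  exact hg.surjOn_Icc hx hy ⟨hxμ, hyμ⟩

theorem StrictMonoOn.lt_of_hasDerivAt_eq_zero {F F' : ℝ → ℝ} {S : Set ℝ} [S.OrdConnected]
    (hF : ∀ y ∈ S, HasDerivAt F (F' y) y) (hF' : StrictMonoOn F' S) {c x : ℝ} (hc : c ∈ S)
    (hc0 : F' c = 0) (hx : x ∈ S) (hne : x ≠ c) : F c < F x := by
  have hcont : ∀ {u v}, u ∈ S → v ∈ S → ContinuousOn F (Icc u v) := fun hu hv y hy =>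
    (hF y (Set.OrdConnected.out ‹_› hu hv hy)).continuousAt.continuousWithinAt
  rcases hne.lt_or_gt with hxc | hcx
  · refine strictAntiOn_of_deriv_neg (convex_Icc x c) (hcont hx hc) (fun y hy => ?_)
      (left_mem_Icc.2 hxc.le) (right_mem_Icc.2 hxc.le) hxc
    rw [interior_Icc] at hy
    have hyS : y ∈ S := Set.OrdConnected.out ‹_› hx hc (Ioo_subset_Icc_self hy)
    rw [(hF y hyS).deriv, ← hc0]
    exact hF' hyS hc hy.2
  · refine strictMonoOn_of_deriv_pos (convex_Icc c x) (hcont hc hx) (fun y hy => ?_)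
      (left_mem_Icc.2 hcx.le) (right_mem_Icc.2 hcx.le) hcx
    rw [interior_Icc] at hy
    have hyS : y ∈ S := Set.OrdConnected.out ‹_› hc hx (Ioo_subset_Icc_self hy)
    rw [(hF y hyS).deriv, ← hc0]
    exact hF' hc hyS hy.1

theorem stmt_11_general (a : ℝ) (ha : 0 < a)
    (f₀ sβ : ℝ → ℝ)
    (hderiv : ∀ x : ℝ, 0 < x → HasDerivAt f₀ (sβ x) x)
    (hmono : MonotoneOn sβ (Ioi 0))
    (hcont : ContinuousOn sβ (Ioi 0))
    (hbot : Tendsto sβ (nhdsWithin 0 (Ioi 0)) atBot) :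
    (∀ μ : ℝ, ∃! x : ℝ, 0 < x ∧ sβ x = μ - a * x) ∧
    (∀ x₁ : ℝ → ℝ,
      (∀ μ : ℝ, 0 < x₁ μ ∧ sβ (x₁ μ) = μ - a * x₁ μ) →
      (∀ μ : ℝ, ∀ x : ℝ, 0 < x → x ≠ x₁ μ →
          f₀ (x₁ μ) - μ * x₁ μ + a / 2 * (x₁ μ) ^ 2 < f₀ x - μ * x + a / 2 * x ^ 2) ∧
        Monotone x₁) := by
  set g : ℝ → ℝ := fun x => sβ x + a * x
  have hg_strict : StrictMonoOn g (Ioi 0) := hmono.strictMonoOn_add_mul ha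
  have hg_surj : SurjOn g (Ioi 0) univ :=
    (hcont.add (by fun_prop)).surjOn_Ioi_of_tendsto (hbot.add_mul_atBot nhdsWithin_le_nhds)
      (hmono.tendsto_add_mul_atTop ha)
  have hsol : ∀ μ x, sβ x = μ - a * x ↔ g x = μ := fun μ x => by
    constructor <;> intro h <;> simp only [g] at * <;> linarith
  refine ⟨fun μ => ?_, fun x₁ hx₁ => ⟨fun μ x hx hne => ?_, fun μ μ' hμ => ?_⟩⟩
  · obtain ⟨x, hx, hgx⟩ := hg_surj (mem_univ μ)
    exact ⟨x, ⟨hx, (hsol μ x).2 hgx⟩, fun y ⟨hy, hsy⟩ =>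
      hg_strict.injOn hy hx (((hsol μ y).1 hsy).trans hgx.symm)⟩
  · have hF : ∀ y ∈ Ioi (0 : ℝ),
        HasDerivAt (fun x => f₀ x - μ * x + a / 2 * x ^ 2) (g y - μ) y := fun y hy => by
      refine (((hderiv y hy).sub ((hasDerivAt_id y).const_mul μ)).add
        ((hasDerivAt_pow 2 y).const_mul (a / 2))).congr_deriv ?_
      simp only [g]; ring
    refine StrictMonoOn.lt_of_hasDerivAt_eq_zero hF (fun y hy z hz hyz => ?_) (hx₁ μ).1
      (sub_eq_zero.2 ((hsol μ _).1 (hx₁ μ).2)) hx hne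
    exact sub_lt_sub_right (hg_strict hy hz hyz) μ
  · rw [← hg_strict.le_iff_le (hx₁ μ).1 (hx₁ μ').1, (hsol μ _).1 (hx₁ μ).2,
      (hsol μ' _).1 (hx₁ μ').2]
    exact hμ

/-- `F(x) = f₀(β,x) - μx + (a/2)x²` has a unique stationary point `x̃₁(μ)` on
`(0,∞)` — characterized by `s_β(x̃₁(μ)) = μ - a·x̃₁(μ)` — which is the unique
global minimizer of `F` on `(0,∞)`; moreover `μ ↦ x̃₁(μ)` is non-decreasing. -/
theorem stmt_11 (d : ℕ) (hd : 3 ≤ d) (β a : ℝ) (hβ : 0 < β) (ha : 0 < a)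
    (ρc : ℝ) (hρc : 0 < ρc)
    (f₀ sβ : ℝ → ℝ)
    (hconv : ConvexOn ℝ (Ioi 0) f₀)
    (hderiv : ∀ x : ℝ, 0 < x → HasDerivAt f₀ (sβ x) x)
    (hmono : MonotoneOn sβ (Ioi 0))
    (hcont : ContinuousOn sβ (Ioi 0))
    (hstrict : StrictMonoOn sβ (Ioc 0 ρc))
    (hzero : ∀ x : ℝ, ρc ≤ x → sβ x = 0)
    (hbot : Tendsto sβ (nhdsWithin 0 (Ioi 0)) atBot) :
    (∀ μ : ℝ, ∃! x : ℝ, 0 < x ∧ sβ x = μ - a * x) ∧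
    (∀ x₁ : ℝ → ℝ,
      (∀ μ : ℝ, 0 < x₁ μ ∧ sβ (x₁ μ) = μ - a * x₁ μ) →
      (∀ μ : ℝ, ∀ x : ℝ, 0 < x → x ≠ x₁ μ →
          f₀ (x₁ μ) - μ * x₁ μ + a / 2 * (x₁ μ) ^ 2 < f₀ x - μ * x + a / 2 * x ^ 2) ∧
        Monotone x₁) :=
  stmt_11_general a ha f₀ sβ hderiv hmono hcont hbot
end

section
/- The difference D(μ) = F_μ(x̃₁(μ), 0) - F_μ(x̃₂(μ), ỹ(x̃₂(μ))) is differentiable in μ with dD/dμ = (1/a)(s_β(x̃₁(μ)) - s_β(x̃₂(μ))) > 0 on (μ_t, μ_c), where differentiation uses that x̃₁ and x̃₂ are stationary points; hence D is strictly increasing on (μ_t, μ_c). -/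
open Real Set

/-- The difference `D(μ) = F_μ(x̃₁(μ),0) - F_μ(x̃₂(μ), ỹ(x̃₂(μ)))` is differentiable on
`(μ_t, μ_c)` with `D'(μ) = (1/a)(s_β(x̃₁(μ)) - s_β(x̃₂(μ))) > 0`; hence `D` is strictly
increasing on `(μ_t, μ_c)`. -/
theorem stmt_13 (d : ℕ) (hd : 3 ≤ d) (β a b : ℝ) (hβ : 0 < β) (hb : 0 < b) (hab : b < a)
    (ρc μt μc : ℝ) (hρc : 0 < ρc) (hμtμc : μt < μc)
    (f₀ sβ : ℝ → ℝ)
    (hderiv : ∀ x : ℝ, 0 < x → HasDerivAt f₀ (sβ x) x)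
    (hstrict : StrictMonoOn sβ (Ioc 0 ρc))
    (F : ℝ → ℝ → ℝ → ℝ)
    (hF : F = fun μ x y => f₀ x - μ * (x + y) + a / 2 * (x + y) ^ 2 - b / 2 * y ^ 2)
    (x₁ x₂ : ℝ → ℝ)
    (hx₁ : ∀ μ : ℝ, μ ∈ Ioo μt μc →
      0 < x₁ μ ∧ x₁ μ < ρc ∧ sβ (x₁ μ) = μ - a * x₁ μ ∧ μ / a ≤ x₁ μ)
    (hx₂ : ∀ μ : ℝ, μ ∈ Ioo μt μc →
      0 < x₂ μ ∧ x₂ μ < ρc ∧ sβ (x₂ μ) = -(b / (a - b)) * (μ - a * x₂ μ) ∧ x₂ μ < μ / a)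
    (hx₁diff : ∀ μ ∈ Ioo μt μc, DifferentiableAt ℝ x₁ μ)
    (hx₂diff : ∀ μ ∈ Ioo μt μc, DifferentiableAt ℝ x₂ μ)
    (D : ℝ → ℝ)
    (hD : D = fun μ =>
      F μ (x₁ μ) 0 - F μ (x₂ μ) (max (μ - a * x₂ μ) 0 / (a - b))) :
    (∀ μ ∈ Ioo μt μc,
      HasDerivAt D ((1 / a) * (sβ (x₁ μ) - sβ (x₂ μ))) μ ∧
        0 < (1 / a) * (sβ (x₁ μ) - sβ (x₂ μ))) ∧
    StrictMonoOn D (Ioo μt μc) := by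
  have ha : (0:ℝ) < a := hb.trans hab
  have hab0 : (0:ℝ) < a - b := sub_pos.mpr hab
  have hane : a ≠ 0 := ne_of_gt ha
  have habne : a - b ≠ 0 := ne_of_gt hab0
  have key : ∀ μ ∈ Ioo μt μc,
      HasDerivAt D ((1 / a) * (sβ (x₁ μ) - sβ (x₂ μ))) μ ∧
        0 < (1 / a) * (sβ (x₁ μ) - sβ (x₂ μ)) := by
    intro μ hμ
    obtain ⟨h1pos, h1lt, h1eq, h1ge⟩ := hx₁ μ hμ
    obtain ⟨h2pos, h2lt, h2eq, h2lt'⟩ := hx₂ μ hμ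
    have hx2lt : x₂ μ < x₁ μ := lt_of_lt_of_le h2lt' h1ge
    have hslt : sβ (x₂ μ) < sβ (x₁ μ) :=
      hstrict ⟨h2pos, h2lt.le⟩ ⟨h1pos, h1lt.le⟩ hx2lt
    have hpos : 0 < (1 / a) * (sβ (x₁ μ) - sβ (x₂ μ)) :=
      mul_pos (by positivity) (sub_pos.mpr hslt)
    refine ⟨?_, hpos⟩
    have hx₁' : HasDerivAt x₁ (deriv x₁ μ) μ := (hx₁diff μ hμ).hasDerivAt
    have hx₂' : HasDerivAt x₂ (deriv x₂ μ) μ := (hx₂diff μ hμ).hasDerivAt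
    set p := deriv x₁ μ with hp
    set q := deriv x₂ μ with hq
    set w : ℝ := (μ - a * x₂ μ) / (a - b) with hw
    set r : ℝ := (1 - a * q) / (a - b) with hr
    -- the smooth local expression
    set E : ℝ → ℝ := fun μ' =>
      (f₀ (x₁ μ') - μ' * x₁ μ' + a / 2 * (x₁ μ') ^ 2) -
        (f₀ (x₂ μ') - μ' * (x₂ μ' + (μ' - a * x₂ μ') / (a - b)) +
          a / 2 * (x₂ μ' + (μ' - a * x₂ μ') / (a - b)) ^ 2 -
          b / 2 * ((μ' - a * x₂ μ') / (a - b)) ^ 2) with hE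
    -- D agrees with E near μ
    have hμpos : 0 < μ - a * x₂ μ := by
      have := (lt_div_iff₀ ha).mp h2lt'
      linarith
    have hcont : ContinuousAt (fun μ' => μ' - a * x₂ μ') μ :=
      continuousAt_id.sub ((hx₂diff μ hμ).continuousAt.const_smul a)
    have hev : ∀ᶠ μ' in nhds μ, 0 < μ' - a * x₂ μ' :=
      hcont.eventually_mem (isOpen_Ioi.mem_nhds hμpos)
    have heq : D =ᶠ[nhds μ] E := by
      filter_upwards [hev] with μ' h
      simp only [hD, hF, hE, max_eq_left h.le]
      ring
    -- derivatives of the pieces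
    have hf1 : HasDerivAt (fun μ' => f₀ (x₁ μ')) (sβ (x₁ μ) * p) μ :=
      (hderiv _ h1pos).comp μ hx₁'
    have hf2 : HasDerivAt (fun μ' => f₀ (x₂ μ')) (sβ (x₂ μ) * q) μ :=
      (hderiv _ h2pos).comp μ hx₂'
    have hg : HasDerivAt (fun μ' => (μ' - a * x₂ μ') / (a - b)) r μ := by
      have : HasDerivAt (fun μ' => μ' - a * x₂ μ') (1 - a * q) μ :=
        (hasDerivAt_id μ).sub (hx₂'.const_mul a)
      simpa [hr] using this.div_const (a - b)
    have hS : HasDerivAt (fun μ' => x₂ μ' + (μ' - a * x₂ μ') / (a - b)) (q + r) μ :=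
      hx₂'.add hg
    have hA : HasDerivAt (fun μ' => f₀ (x₁ μ') - μ' * x₁ μ' + a / 2 * (x₁ μ') ^ 2)
        (sβ (x₁ μ) * p - (1 * x₁ μ + μ * p) + a / 2 * (2 * x₁ μ ^ 1 * p)) μ :=
      (hf1.sub ((hasDerivAt_id μ).mul hx₁')).add ((hx₁'.pow 2).const_mul (a / 2))
    have hB : HasDerivAt (fun μ' =>
        f₀ (x₂ μ') - μ' * (x₂ μ' + (μ' - a * x₂ μ') / (a - b)) +
          a / 2 * (x₂ μ' + (μ' - a * x₂ μ') / (a - b)) ^ 2 -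
          b / 2 * ((μ' - a * x₂ μ') / (a - b)) ^ 2)
        (sβ (x₂ μ) * q - (1 * (x₂ μ + w) + μ * (q + r)) +
          a / 2 * (2 * (x₂ μ + w) ^ 1 * (q + r)) - b / 2 * (2 * w ^ 1 * r)) μ :=
      ((hf2.sub ((hasDerivAt_id μ).mul hS)).add
        ((hS.pow 2).const_mul (a / 2))).sub ((hg.pow 2).const_mul (b / 2))
    have hDE : HasDerivAt E
        ((sβ (x₁ μ) * p - (1 * x₁ μ + μ * p) + a / 2 * (2 * x₁ μ ^ 1 * p)) -
          (sβ (x₂ μ) * q - (1 * (x₂ μ + w) + μ * (q + r)) +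
            a / 2 * (2 * (x₂ μ + w) ^ 1 * (q + r)) - b / 2 * (2 * w ^ 1 * r))) μ :=
      hA.sub hB
    have hval : (sβ (x₁ μ) * p - (1 * x₁ μ + μ * p) + a / 2 * (2 * x₁ μ ^ 1 * p)) -
          (sβ (x₂ μ) * q - (1 * (x₂ μ + w) + μ * (q + r)) +
            a / 2 * (2 * (x₂ μ + w) ^ 1 * (q + r)) - b / 2 * (2 * w ^ 1 * r)) =
        (1 / a) * (sβ (x₁ μ) - sβ (x₂ μ)) := by
      rw [h1eq, h2eq, hw, hr]
      field_simp
      ring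
    rw [hval] at hDE
    exact hDE.congr_of_eventuallyEq heq
  refine ⟨key, ?_⟩
  apply strictMonoOn_of_deriv_pos (convex_Ioo μt μc)
  · intro μ hμ
    exact ((key μ hμ).1.differentiableAt.continuousAt).continuousWithinAt
  · intro μ hμ
    rw [interior_Ioo] at hμ
    rw [(key μ hμ).1.deriv]
    exact (key μ hμ).2
end

section
/- For d = 2 and all β > 0, μ_t(β) = (a/(4πβ)) ((1+C₂) log(1+C₂) - C₂ log C₂), where C₂ = (4π/a)((a-b)/b). -/
open Real Set

/-! Substituting `t = e^{βs}` turns the infimum over `s < 0` into `a/(4πβ)` times the minimum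
over `t ∈ (0,1)` of `-log(1-t) - C log t`, a convex function whose critical point is
`t = C/(1+C)`. The lower bound needs no calculus: it is a weighted sum of two instances of
`log x ≤ x - 1`. -/

-- `log x ≤ x - 1` at `x = (1-t)(1+C)` plus `C` times it at `x = t(1+C)/C`; the right-hand sides
-- add up to `0`.
lemma mul_log_sub_mul_log_le (C : ℝ) {t : ℝ} (hC : 0 < C) (ht0 : 0 < t) (ht1 : t < 1) :
    (1 + C) * log (1 + C) - C * log C ≤ -log (1 - t) - C * log t := by
  have h1t : 0 < 1 - t := by linarith
  have h1C : 0 < 1 + C := by linarith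
  have hleft : log (1 - t) + log (1 + C) ≤ (1 - t) * (1 + C) - 1 := by
    rw [← log_mul h1t.ne' h1C.ne']
    exact log_le_sub_one_of_pos (mul_pos h1t h1C)
  have hright : log t + log (1 + C) - log C ≤ t * (1 + C) / C - 1 := by
    rw [← log_mul ht0.ne' h1C.ne', ← log_div (mul_pos ht0 h1C).ne' hC.ne']
    exact log_le_sub_one_of_pos (div_pos (mul_pos ht0 h1C) hC)
  have hcancel : C * (t * (1 + C) / C - 1) = t * (1 + C) - C := by field_simp
  nlinarith [mul_le_mul_of_nonneg_left hright hC.le]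

lemma neg_log_one_sub_sub_mul_log_of_eq_div (C : ℝ) (hC : 0 < C) :
    -log (1 - C / (1 + C)) - C * log (C / (1 + C)) = (1 + C) * log (1 + C) - C * log C := by
  have h1C : 0 < 1 + C := by linarith
  have hcompl : 1 - C / (1 + C) = (1 + C)⁻¹ := by field_simp; ring
  rw [hcompl, log_inv, log_div hC.ne' h1C.ne']
  ring

lemma isLeast_neg_log_one_sub_sub_mul_log (C : ℝ) (hC : 0 < C) :
    IsLeast ((fun t => -log (1 - t) - C * log t) '' Ioo 0 1)
      ((1 + C) * log (1 + C) - C * log C) := by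
  have h1C : 0 < 1 + C := by linarith
  refine ⟨⟨C / (1 + C), ⟨div_pos hC h1C, ?_⟩, neg_log_one_sub_sub_mul_log_of_eq_div C hC⟩, ?_⟩
  · rw [div_lt_one h1C]; linarith
  · rintro _ ⟨t, ⟨ht0, ht1⟩, rfl⟩
    exact mul_log_sub_mul_log_le C hC ht0 ht1

lemma image_exp_mul_Iio_zero {β : ℝ} (hβ : 0 < β) :
    (fun s => exp (β * s)) '' Iio 0 = Ioo 0 1 := by
  rw [← image_image exp (β * ·), image_mul_left_Iio hβ, mul_zero, image_exp_Iio, exp_zero]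

/-- For `d = 2` and all `β > 0`,
`μ_t(β) = (a/(4πβ)) ((1+C₂) log(1+C₂) - C₂ log C₂)` with `C₂ = (4π/a)((a-b)/b)`,
where `μ_t(β) = inf_{s<0} {a ∂p₀/∂α(β,s) - ((a-b)/b) s}` and in `d = 2`
`∂p₀/∂α(β,s) = (4πβ)⁻¹ g(βs,1) = -(4πβ)⁻¹ log(1 - e^{βs})`. -/
theorem stmt_15 (β a b : ℝ) (hβ : 0 < β) (hb : 0 < b) (hab : b < a)
    (C : ℝ) (hC : C = (4 * π / a) * ((a - b) / b)) :
    sInf {v : ℝ | ∃ s < (0 : ℝ),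
        v = a * ((4 * π * β)⁻¹ * (-Real.log (1 - Real.exp (β * s)))) - (a - b) / b * s}
      = a / (4 * π * β) * ((1 + C) * Real.log (1 + C) - C * Real.log C) := by
  have ha : 0 < a := hb.trans hab
  have hC0 : 0 < C := by rw [hC]; have := sub_pos.2 hab; positivity
  have hslope : (a - b) / b = a / (4 * π * β) * C * β := by rw [hC]; field_simp
  have hval : ∀ s, a * ((4 * π * β)⁻¹ * (-log (1 - exp (β * s)))) - (a - b) / b * s
      = a / (4 * π * β) * (-log (1 - exp (β * s)) - C * log (exp (β * s))) := by
    intro s; rw [log_exp, hslope]; ring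
  have hset : {v : ℝ | ∃ s < (0 : ℝ),
        v = a * ((4 * π * β)⁻¹ * (-Real.log (1 - Real.exp (β * s)))) - (a - b) / b * s}
      = (a / (4 * π * β) * ·) '' ((fun t => -log (1 - t) - C * log t) ''
          ((fun s => exp (β * s)) '' Iio 0)) := by
    ext v
    simp only [mem_ofPred_eq, image_image, mem_image, mem_Iio, hval]
    exact exists_congr fun s => and_congr_right' eq_comm
  have hscale : Monotone (a / (4 * π * β) * ·) := monotone_mul_left_of_nonneg (by positivity)
  rw [hset, image_exp_mul_Iio_zero hβ]
  exact (hscale.map_isLeast (isLeast_neg_log_one_sub_sub_mul_log C hC0)).csInf_eq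
end

section
/- For d ≥ 5 and β ≥ β_t(a,b,d) := (a (4π)^{-d/2} (b/(a-b)) ζ(d/2 - 1))^{2/(d-2)}, one has μ_t(β) = μ_c(β) := a (4πβ)^{-d/2} ζ(d/2); equivalently, the infimum inf_{s<0}{a ∂p_0/∂α(β,s) - ((a-b)/b)s} is attained in the limit s ↑ 0 if and only if a ∂²p_0/∂α²(β,0) ≤ (a-b)/b. -/
/-!
Write `F(s) = ∑ wₖ exp (s ℓₖ)` with `wₖ = (k+1)^(-d/2)`, `ℓₖ = β (k+1)`, so that the objective is
`A F(s) - T s` with `A = a (4πβ)^(-d/2)`, `T = (a-b)/b`, and `μ_c = A F(0)`. The function `F` is convex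
with left derivative `F'(0) = ∑ wₖ ℓₖ` at `0`. If `A F'(0) ≤ T`, the tangent line at `0` shows that the
objective never drops below `A F(0)`, while it tends to `A F(0)` as `s ↑ 0`. If `A F'(0) > T`, the
tangent line at a point `s < 0` gives `F(s) - F(0) ≤ s F'(s)`, and `F'(s) → F'(0)` by dominated
convergence, so the objective drops below `A F(0)` close to `0`. Since `β (4πβ)^(-d/2)` is a multiple
of `β^(-(d-2)/2)`, the condition `A F'(0) ≤ T` is `β ≥ β_t`.
-/

open Real Set Filter Topology

lemma summable_nat_add_one_rpow {p : ℝ} (hp : p < -1) :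
    Summable fun k : ℕ => ((k : ℝ) + 1) ^ p := by
  simpa using (summable_nat_add_iff 1).2 (Real.summable_nat_rpow.2 hp)

lemma exp_sub_one_le_mul_exp (x : ℝ) : exp x - 1 ≤ x * exp x := by
  have h := mul_le_mul_of_nonneg_right (one_sub_le_exp_neg x) (exp_pos x).le
  rw [exp_neg, inv_mul_cancel₀ (exp_pos x).ne'] at h
  linarith

lemma mul_exp_mul_le_self {w ℓ s : ℝ} (hw : 0 ≤ w) (hℓ : 0 ≤ ℓ) (hs : s ≤ 0) :
    w * exp (s * ℓ) ≤ w :=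
  mul_le_of_le_one_right hw (exp_le_one_iff.2 (mul_nonpos_of_nonpos_of_nonneg hs hℓ))

section ExpSum

variable {ι : Type*} {w ℓ : ι → ℝ}

lemma summable_mul_exp_mul_of_nonpos (hw : ∀ i, 0 ≤ w i) (hℓ : ∀ i, 0 ≤ ℓ i)
    (hsum : Summable w) {s : ℝ} (hs : s ≤ 0) :
    Summable fun i => w i * exp (s * ℓ i) :=
  hsum.of_nonneg_of_le (fun i => mul_nonneg (hw i) (exp_pos _).le) fun i =>
    mul_exp_mul_le_self (hw i) (hℓ i) hs

lemma tsum_mul_exp_mul_le (hw : ∀ i, 0 ≤ w i) (hℓ : ∀ i, 0 ≤ ℓ i) (hsum : Summable w) {s : ℝ}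
    (hs : s ≤ 0) : ∑' i, w i * exp (s * ℓ i) ≤ ∑' i, w i :=
  (summable_mul_exp_mul_of_nonpos hw hℓ hsum hs).tsum_le_tsum
    (fun i => mul_exp_mul_le_self (hw i) (hℓ i) hs) hsum

lemma mul_tsum_le_tsum_mul_exp_mul_sub (hw : ∀ i, 0 ≤ w i) (hℓ : ∀ i, 0 ≤ ℓ i)
    (hsum : Summable w) (hsumℓ : Summable fun i => w i * ℓ i) {s : ℝ} (hs : s ≤ 0) :
    s * ∑' i, w i * ℓ i ≤ ∑' i, w i * exp (s * ℓ i) - ∑' i, w i := by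
  rw [← tsum_mul_left, ← (summable_mul_exp_mul_of_nonpos hw hℓ hsum hs).tsum_sub hsum]
  refine (hsumℓ.mul_left s).tsum_le_tsum (fun i => ?_)
    ((summable_mul_exp_mul_of_nonpos hw hℓ hsum hs).sub hsum)
  nlinarith [mul_le_mul_of_nonneg_left (add_one_le_exp (s * ℓ i)) (hw i)]

lemma tsum_mul_exp_mul_sub_le (hw : ∀ i, 0 ≤ w i) (hℓ : ∀ i, 0 ≤ ℓ i)
    (hsum : Summable w) (hsumℓ : Summable fun i => w i * ℓ i) {s : ℝ} (hs : s ≤ 0) :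
    ∑' i, w i * exp (s * ℓ i) - ∑' i, w i ≤ s * ∑' i, w i * ℓ i * exp (s * ℓ i) := by
  have hwℓ : ∀ i, 0 ≤ w i * ℓ i := fun i => mul_nonneg (hw i) (hℓ i)
  rw [← tsum_mul_left, ← (summable_mul_exp_mul_of_nonpos hw hℓ hsum hs).tsum_sub hsum]
  refine ((summable_mul_exp_mul_of_nonpos hw hℓ hsum hs).sub hsum).tsum_le_tsum (fun i => ?_)
    ((summable_mul_exp_mul_of_nonpos hwℓ hℓ hsumℓ hs).mul_left s)
  nlinarith [mul_le_mul_of_nonneg_left (exp_sub_one_le_mul_exp (s * ℓ i)) (hw i)]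

lemma tendsto_tsum_mul_mul_exp_mul_nhdsLT (hw : ∀ i, 0 ≤ w i) (hℓ : ∀ i, 0 ≤ ℓ i)
    (hsumℓ : Summable fun i => w i * ℓ i) :
    Tendsto (fun s => ∑' i, w i * ℓ i * exp (s * ℓ i)) (𝓝[<] 0) (𝓝 (∑' i, w i * ℓ i)) := by
  refine tendsto_tsum_of_dominated_convergence hsumℓ (fun i => ?_) ?_
  · refine tendsto_nhdsWithin_of_tendsto_nhds ?_
    simpa using ((continuous_mul_const (ℓ i)).rexp.const_mul (w i * ℓ i)).tendsto 0
  · filter_upwards [self_mem_nhdsWithin] with s (hs : s < 0) i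
    have hwℓ := mul_nonneg (hw i) (hℓ i)
    rw [Real.norm_of_nonneg (mul_nonneg hwℓ (exp_pos _).le)]
    exact mul_exp_mul_le_self hwℓ (hℓ i) hs.le

variable {A T : ℝ}

lemma bddBelow_tsum_mul_exp_mul_sub (hw : ∀ i, 0 ≤ w i) (hA : 0 ≤ A) (hT : 0 ≤ T) :
    BddBelow {v | ∃ s < (0 : ℝ), v = A * ∑' i, w i * exp (s * ℓ i) - T * s} := by
  refine ⟨0, ?_⟩
  rintro _ ⟨s, hs, rfl⟩
  have : 0 ≤ ∑' i, w i * exp (s * ℓ i) := tsum_nonneg fun i => mul_nonneg (hw i) (exp_pos _).le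
  nlinarith [mul_nonneg hA this]

lemma sInf_tsum_mul_exp_mul_sub_eq_of_le (hw : ∀ i, 0 ≤ w i) (hℓ : ∀ i, 0 ≤ ℓ i)
    (hsum : Summable w) (hsumℓ : Summable fun i => w i * ℓ i) (hA : 0 ≤ A)
    (hAT : A * ∑' i, w i * ℓ i ≤ T) :
    sInf {v | ∃ s < (0 : ℝ), v = A * ∑' i, w i * exp (s * ℓ i) - T * s} = A * ∑' i, w i := by
  have hT : 0 ≤ T := (mul_nonneg hA (tsum_nonneg fun i => mul_nonneg (hw i) (hℓ i))).trans hAT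
  apply le_antisymm
  · have hlim : Tendsto (fun s => A * ∑' i, w i - T * s) (𝓝[<] 0) (𝓝 (A * ∑' i, w i)) :=
      tendsto_nhdsWithin_of_tendsto_nhds ((by fun_prop : Continuous fun s : ℝ =>
        A * ∑' i, w i - T * s).tendsto' 0 _ (by simp))
    refine ge_of_tendsto hlim ?_
    filter_upwards [self_mem_nhdsWithin] with s (hs : s < 0)
    refine (csInf_le (bddBelow_tsum_mul_exp_mul_sub hw hA hT) ⟨s, hs, rfl⟩).trans ?_
    nlinarith [mul_le_mul_of_nonneg_left (tsum_mul_exp_mul_le hw hℓ hsum hs.le) hA]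
  · refine le_csInf ⟨_, -1, neg_one_lt_zero, rfl⟩ ?_
    rintro _ ⟨s, hs, rfl⟩
    have := mul_le_mul_of_nonneg_left
      (mul_tsum_le_tsum_mul_exp_mul_sub hw hℓ hsum hsumℓ hs.le) hA
    nlinarith

lemma sInf_tsum_mul_exp_mul_sub_lt (hw : ∀ i, 0 ≤ w i) (hℓ : ∀ i, 0 ≤ ℓ i)
    (hsum : Summable w) (hsumℓ : Summable fun i => w i * ℓ i) (hA : 0 ≤ A) (hT : 0 ≤ T)
    (hTA : T < A * ∑' i, w i * ℓ i) :
    sInf {v | ∃ s < (0 : ℝ), v = A * ∑' i, w i * exp (s * ℓ i) - T * s} < A * ∑' i, w i := by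
  obtain ⟨s, hs, hTs⟩ : ∃ s < (0 : ℝ), T < A * ∑' i, w i * ℓ i * exp (s * ℓ i) :=
    (((tendsto_tsum_mul_mul_exp_mul_nhdsLT hw hℓ hsumℓ).const_mul A).eventually
      (lt_mem_nhds hTA)).and self_mem_nhdsWithin |>.exists.imp fun s h => ⟨h.2, h.1⟩
  refine (csInf_le (bddBelow_tsum_mul_exp_mul_sub hw hA hT) ⟨s, hs, rfl⟩).trans_lt ?_
  have := mul_le_mul_of_nonneg_left (tsum_mul_exp_mul_sub_le hw hℓ hsum hsumℓ hs.le) hA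
  nlinarith [mul_lt_mul_of_neg_left hTs hs]

lemma sInf_tsum_mul_exp_mul_sub_eq_iff (hw : ∀ i, 0 ≤ w i) (hℓ : ∀ i, 0 ≤ ℓ i)
    (hsum : Summable w) (hsumℓ : Summable fun i => w i * ℓ i) (hA : 0 ≤ A) (hT : 0 ≤ T) :
    sInf {v | ∃ s < (0 : ℝ), v = A * ∑' i, w i * exp (s * ℓ i) - T * s} = A * ∑' i, w i ↔
      A * ∑' i, w i * ℓ i ≤ T :=
  ⟨fun h => not_lt.1 fun hTA => (sInf_tsum_mul_exp_mul_sub_lt hw hℓ hsum hsumℓ hA hT hTA).ne h,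
    sInf_tsum_mul_exp_mul_sub_eq_of_le hw hℓ hsum hsumℓ hA⟩

end ExpSum

lemma rpow_two_div_le_iff {c β d K T : ℝ} (hc : 0 < c) (hβ : 0 < β) (hd : 2 < d) (hK : 0 ≤ K)
    (hT : 0 < T) :
    (K * c ^ (-d / 2) / T) ^ (2 / (d - 2)) ≤ β ↔ K * β * (c * β) ^ (-d / 2) ≤ T := by
  have hp : 0 < (d - 2) / 2 := by linarith
  have hB : 0 < β ^ ((d - 2) / 2) := rpow_pos_of_pos hβ _
  have hβc : β * (c * β) ^ (-d / 2) = c ^ (-d / 2) / β ^ ((d - 2) / 2) := by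
    rw [mul_rpow hc.le hβ.le, mul_left_comm, ← rpow_one_add' hβ.le (by linarith),
      show 1 + -d / 2 = -((d - 2) / 2) by ring, rpow_neg hβ.le]
    rfl
  rw [← inv_div (d - 2), rpow_inv_le_iff_of_pos (by positivity) hβ.le hp, mul_assoc, hβc,
    div_le_iff₀ hT, ← mul_div_assoc, div_le_iff₀ hB, mul_comm T]

/-- For `d ≥ 5` and `β ≥ β_t(a,b,d) = (a (4π)^{-d/2} (b/(a-b)) ζ(d/2-1))^{2/(d-2)}`
one has `μ_t(β) = μ_c(β) = a (4πβ)^{-d/2} ζ(d/2)`; equivalently the infimum defining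
`μ_t` is attained in the limit `s ↑ 0` iff `a ∂²p₀/∂α²(β,0) ≤ (a-b)/b`, where
`∂²p₀/∂α²(β,0) = β (4πβ)^{-d/2} ζ(d/2 - 1)`. -/
theorem stmt_16 (d : ℕ) (hd : 5 ≤ d) (β a b : ℝ) (hβ : 0 < β) (hb : 0 < b) (hab : b < a)
    (p₀' : ℝ → ℝ)
    (hp₀' : p₀' = fun s =>
      (4 * π * β) ^ (-(d : ℝ) / 2) *
        ∑' k : ℕ, ((k : ℝ) + 1) ^ (-(d : ℝ) / 2) * Real.exp (β * s * ((k : ℝ) + 1)))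
    (μt μc βt : ℝ)
    (hμt : μt = sInf {v : ℝ | ∃ s < (0 : ℝ), v = a * p₀' s - (a - b) / b * s})
    (hμc : μc = a * (4 * π * β) ^ (-(d : ℝ) / 2) * ∑' k : ℕ, ((k : ℝ) + 1) ^ (-(d : ℝ) / 2))
    (hβt : βt = (a * (4 * π) ^ (-(d : ℝ) / 2) * (b / (a - b)) *
      ∑' k : ℕ, ((k : ℝ) + 1) ^ (-((d : ℝ) / 2 - 1))) ^ (2 / ((d : ℝ) - 2))) :
    (βt ≤ β → μt = μc) ∧
    (μt = μc ↔
      a * (β * (4 * π * β) ^ (-(d : ℝ) / 2) *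
        ∑' k : ℕ, ((k : ℝ) + 1) ^ (-((d : ℝ) / 2 - 1))) ≤ (a - b) / b) := by
  have hd' : (5 : ℝ) ≤ d := by exact_mod_cast hd
  set w : ℕ → ℝ := fun k => ((k : ℝ) + 1) ^ (-(d : ℝ) / 2) with hw_def
  set ℓ : ℕ → ℝ := fun k : ℕ => β * ((k : ℝ) + 1) with hℓ_def
  set Z := ∑' k : ℕ, ((k : ℝ) + 1) ^ (-((d : ℝ) / 2 - 1))
  have hw : ∀ k, 0 ≤ w k := fun k => by positivity
  have hℓ : ∀ k, 0 ≤ ℓ k := fun k => by positivity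
  have hwℓ : (fun k => w k * ℓ k) = fun k : ℕ => β * ((k : ℝ) + 1) ^ (-((d : ℝ) / 2 - 1)) := by
    ext k
    rw [show -((d : ℝ) / 2 - 1) = -(d : ℝ) / 2 + 1 by ring, rpow_add_one (by positivity)]
    ring
  have hsum : Summable w := summable_nat_add_one_rpow (by linarith)
  have hsumℓ : Summable fun k => w k * ℓ k := by
    rw [hwℓ]; exact (summable_nat_add_one_rpow (by linarith)).mul_left β
  have hset : {v : ℝ | ∃ s < (0 : ℝ), v = a * p₀' s - (a - b) / b * s} =
      {v | ∃ s < (0 : ℝ), v = a * (4 * π * β) ^ (-(d : ℝ) / 2) *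
        ∑' k, w k * exp (s * ℓ k) - (a - b) / b * s} := by
    simp only [hp₀', hw_def, hℓ_def, mul_assoc, mul_left_comm _ β]
  have ha : 0 < a := hb.trans hab
  have hA : 0 ≤ a * (4 * π * β) ^ (-(d : ℝ) / 2) := by positivity
  have hT : 0 < (a - b) / b := div_pos (by linarith) hb
  have key := sInf_tsum_mul_exp_mul_sub_eq_iff hw hℓ hsum hsumℓ hA hT.le
  rw [← hset, ← hμt, ← hμc, hwℓ, tsum_mul_left] at key
  have hcond : a * (4 * π * β) ^ (-(d : ℝ) / 2) * (β * Z) ≤ (a - b) / b ↔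
      a * (β * (4 * π * β) ^ (-(d : ℝ) / 2) * Z) ≤ (a - b) / b := by
    ring_nf
  refine ⟨fun hle => key.2 (hcond.2 ?_), key.trans hcond⟩
  have hβt_eq : βt = (a * Z * (4 * π) ^ (-(d : ℝ) / 2) / ((a - b) / b)) ^ (2 / ((d : ℝ) - 2)) := by
    rw [hβt, div_div_eq_mul_div]
    ring_nf
  have hZ0 : 0 ≤ Z := tsum_nonneg fun k => by positivity
  have hcrit := (rpow_two_div_le_iff (by positivity) hβ (by linarith) (by positivity) hT).1
    (hβt_eq ▸ hle)
  linarith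
end
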